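/- arXiv:2508.21483 — 5 statements merged into one kernel-verified Lean document; each statement's English description precedes it below -/
import Mathlib

section
/- For all integers 1 ≤ n ≤ N and all N×N complex matrices A and B, the free cumulant precursor K_n^{(N)} is additive over averaged sums of unitary conjugacy orbits: ∫_{U(N)} K_n^{(N)}(A + U B U*) dU = K_n^{(N)}(A) + K_n^{(N)}(B). -/
/-!
Since `W (A + V B V⋆) W⋆ = W A W⋆ + (W V) B (W V)⋆`, expanding the cyclic product writes the
integrand as a sum over sets `S` of positions of an `A`-product over `S` times a `B`-product over
`Sᶜ`. After Fubini, left invariance replaces `W V` by an independent Haar unitary, so the double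
integral splits as `∑_S (∫ A-product over S) (∫ B-product over Sᶜ)`. If `∅ ≠ S ≠ univ`, some
`k ∈ S` has `k + 1 ∉ S`; the index `k + 1` then occurs exactly once among the rows and columns of
the `A`-product over `S`, so the reflection `diag(1, …, -1, …, 1)` at that index negates it and its
integral vanishes. Only `S = ∅` and `S = univ` survive, giving `K_n(B) + K_n(A)`.
-/

open MeasureTheory Matrix

/-- The unitary group `U(N)` of `N × N` complex matrices. -/
abbrev UG (N : ℕ) : Type := Matrix.unitaryGroup (Fin N) ℂ

/-- We equip `U(N)` with its Borel σ-algebra. -/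
noncomputable instance (N : ℕ) : MeasurableSpace (UG N) := borel _

instance (N : ℕ) : BorelSpace (UG N) := ⟨rfl⟩

/-- Conjugation `U X U⋆` of a matrix `X` by a unitary matrix `U`. -/
noncomputable def conjU {N : ℕ} (U : UG N) (X : Matrix (Fin N) (Fin N) ℂ) :
    Matrix (Fin N) (Fin N) ℂ :=
  (U : Matrix (Fin N) (Fin N) ℂ) * X * star (U : Matrix (Fin N) (Fin N) ℂ)

/-- The free cumulant precursor
`K_n(X) = N^(n-1) ∫_{U(N)} ∏_{k=0}^{n-1} (U X U⋆)_{k, k+1 mod n} dU` (defined when `n ≤ N`,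
junk value `0` otherwise), with respect to a measure `μ` on `U(N)`. -/
noncomputable def Kcum {N : ℕ} (μ : Measure (UG N)) (n : ℕ)
    (X : Matrix (Fin N) (Fin N) ℂ) : ℂ :=
  if h : n ≤ N then
    (N : ℂ) ^ (n - 1) *
      ∫ U, ∏ k : Fin n,
        conjU U X (Fin.castLE h k) (Fin.castLE h ⟨(k.1 + 1) % n, Nat.mod_lt _ k.pos⟩) ∂μ
  else 0

open Finset

instance Matrix.instSecondCountableTopology {m n R : Type*} [Finite m] [Finite n]
    [TopologicalSpace R] [SecondCountableTopology R] :
    SecondCountableTopology (Matrix m n R) :=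
  inferInstanceAs (SecondCountableTopology (m → n → R))

instance Matrix.unitaryGroup.instCompactSpace {n : Type*} [Fintype n] [DecidableEq n] :
    CompactSpace (unitaryGroup n ℂ) := by
  have hball : IsCompact (Set.univ.pi fun _ : n => Set.univ.pi fun _ : n =>
      Metric.closedBall (0 : ℂ) 1 : Set (Matrix n n ℂ)) :=
    isCompact_univ_pi fun _ => isCompact_univ_pi fun _ => isCompact_closedBall 0 1
  refine isCompact_iff_compactSpace.mp <|
    hball.of_isClosed_subset (isClosed_unitary (R := Matrix n n ℂ)) fun U hU i _ j _ => ?_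
  simpa using entry_norm_bound_of_unitary hU i j

instance Matrix.unitaryGroup.instSecondCountableTopology {n : Type*} [Fintype n]
    [DecidableEq n] : SecondCountableTopology (unitaryGroup n ℂ) :=
  TopologicalSpace.Subtype.secondCountableTopology _

theorem integral_integral_prod_add_mul_eq_sum {G : Type*} [Group G] [TopologicalSpace G]
    [ContinuousMul G] [CompactSpace G] [SecondCountableTopology G] [MeasurableSpace G]
    [BorelSpace G] (μ : Measure G) [IsFiniteMeasure μ] [μ.IsMulLeftInvariant]
    {ι : Type*} [Fintype ι] [DecidableEq ι]
    (f g : ι → G → ℂ) (hf : ∀ k, Continuous (f k)) (hg : ∀ k, Continuous (g k)) :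
    ∫ V, ∫ W, ∏ k, (f k W + g k (W * V)) ∂μ ∂μ =
      ∑ S : Finset ι, (∫ W, ∏ k ∈ S, f k W ∂μ) * ∫ W, ∏ k ∈ Sᶜ, g k W ∂μ := by
  have hprod (S : Finset ι) (h : ι → G → ℂ) (hh : ∀ k, Continuous (h k)) :
      Integrable (fun W => ∏ k ∈ S, h k W) μ :=
    (continuous_finsetProd S fun k _ => hh k).integrable_of_hasCompactSupport
      (.of_compactSpace _)
  rw [integral_integral_swap <|
    Continuous.integrable_of_hasCompactSupport (by fun_prop) (.of_compactSpace _)]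
  calc ∫ W, ∫ V, ∏ k, (f k W + g k (W * V)) ∂μ ∂μ
      = ∫ W, ∫ V, ∏ k, (f k W + g k V) ∂μ ∂μ := by
        congr 1; funext W
        exact integral_mul_left_eq_self (fun V => ∏ k, (f k W + g k V)) W
    _ = ∫ W, ∑ S : Finset ι, (∏ k ∈ S, f k W) * ∫ V, ∏ k ∈ Sᶜ, g k V ∂μ ∂μ := by
        congr 1; funext W
        simp only [Finset.prod_add, powerset_univ, ← compl_eq_univ_sdiff]
        rw [integral_finsetSum _ fun S _ => (hprod _ g hg).const_mul _]
        simp only [integral_const_mul]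
    _ = _ := by
        rw [integral_finsetSum _ fun S _ => (hprod _ f hf).mul_const _]
        simp only [integral_mul_const]

section ConjU

variable {N : ℕ}

lemma continuous_conjU_apply (X : Matrix (Fin N) (Fin N) ℂ) (a b : Fin N) :
    Continuous fun U : UG N => conjU U X a b := by
  unfold conjU
  fun_prop

lemma conjU_add_conjU (U V : UG N) (A B : Matrix (Fin N) (Fin N) ℂ) :
    conjU U (A + conjU V B) = conjU U A + conjU (U * V) B := by
  simp only [conjU, Submonoid.coe_mul, star_mul, mul_add, add_mul, Matrix.mul_assoc]

def signFlip (i : Fin N) : Fin N → ℂ := fun j => if j = i then -1 else 1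

def signFlipUnitary (i : Fin N) : UG N :=
  ⟨diagonal (signFlip i), by
    rw [mem_unitaryGroup_iff, star_eq_conjTranspose, diagonal_conjTranspose,
      diagonal_mul_diagonal, ← diagonal_one]
    congr 1; funext j; by_cases h : j = i <;> simp [signFlip, h]⟩

lemma conjU_signFlipUnitary_mul_apply (i : Fin N) (U : UG N) (X : Matrix (Fin N) (Fin N) ℂ)
    (a b : Fin N) :
    conjU (signFlipUnitary i * U) X a b = signFlip i a * signFlip i b * conjU U X a b := by
  have hstar : star (diagonal (signFlip i)) = diagonal (signFlip i) := by
    rw [star_eq_conjTranspose, diagonal_conjTranspose]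
    congr 1; funext j; by_cases h : j = i <;> simp [signFlip, h]
  have hconj : conjU (signFlipUnitary i * U) X =
      diagonal (signFlip i) * conjU U X * diagonal (signFlip i) := by
    simp only [conjU, signFlipUnitary, Submonoid.coe_mul, star_mul, hstar, Matrix.mul_assoc]
  rw [hconj, mul_diagonal, diagonal_mul]
  ring

lemma prod_signFlip {ι : Type*} (s : Finset ι) (r : ι → Fin N) (i : Fin N) :
    ∏ k ∈ s, signFlip i (r k) = (-1) ^ #{k ∈ s | r k = i} := by
  simp [signFlip, prod_ite]

theorem integral_prod_conjU_apply_eq_zero (μ : Measure (UG N)) [μ.IsMulLeftInvariant]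
    (X : Matrix (Fin N) (Fin N) ℂ) {ι : Type*} (s : Finset ι) (r c : ι → Fin N) (i : Fin N)
    (hodd : Odd (#{k ∈ s | r k = i} + #{k ∈ s | c k = i})) :
    ∫ U, ∏ k ∈ s, conjU U X (r k) (c k) ∂μ = 0 := by
  have hflip (U : UG N) : ∏ k ∈ s, conjU (signFlipUnitary i * U) X (r k) (c k) =
      -∏ k ∈ s, conjU U X (r k) (c k) := by
    simp only [conjU_signFlipUnitary_mul_apply, prod_mul_distrib, prod_signFlip, ← pow_add,
      hodd.neg_one_pow, neg_one_mul]
  exact integral_eq_zero_of_mul_left_eq_neg hflip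

end ConjU

open Fin.NatCast in
theorem Fin.exists_mem_add_one_notMem {n : ℕ} [NeZero n] {S : Finset (Fin n)}
    (hne : S.Nonempty) (hS : S ≠ univ) : ∃ k ∈ S, k + 1 ∉ S := by
  by_contra! hclosed
  obtain ⟨j, hj⟩ := hne
  have hiter (m : ℕ) : j + m ∈ S := by
    induction m with
    | zero => simpa using hj
    | succ m ih => simpa [add_assoc] using hclosed _ ih
  exact hS (eq_univ_of_forall fun k => by simpa using hiter (k - j).val)

theorem integral_prod_conjU_cyclic_eq_zero {N n : ℕ} [NeZero n] (hn : n ≤ N)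
    (μ : Measure (UG N)) [μ.IsMulLeftInvariant] (X : Matrix (Fin N) (Fin N) ℂ)
    {S : Finset (Fin n)} (hne : S.Nonempty) (hS : S ≠ univ) :
    ∫ U, ∏ k ∈ S, conjU U X (Fin.castLE hn k) (Fin.castLE hn (k + 1)) ∂μ = 0 := by
  obtain ⟨k, hk, hk1⟩ := Fin.exists_mem_add_one_notMem hne hS
  refine integral_prod_conjU_apply_eq_zero μ X S _ _ (Fin.castLE hn (k + 1)) ?_
  simp [Fin.castLE_inj, filter_eq', hk, hk1]

lemma Kcum_eq_of_le {N n : ℕ} [NeZero n] (μ : Measure (UG N)) (hn : n ≤ N)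
    (X : Matrix (Fin N) (Fin N) ℂ) :
    Kcum μ n X = (N : ℂ) ^ (n - 1) *
      ∫ U, ∏ k : Fin n, conjU U X (Fin.castLE hn k) (Fin.castLE hn (k + 1)) ∂μ := by
  have hsucc (k : Fin n) : (⟨(k.1 + 1) % n, Nat.mod_lt _ k.pos⟩ : Fin n) = k + 1 :=
    Fin.ext (by simp [Fin.val_add, Nat.add_mod])
  simp only [Kcum, dif_pos hn, hsucc]

/-- Additivity of the free cumulant precursor `K_n` over averaged sums of
unitary conjugacy orbits: `∫_{U(N)} K_n(A + U B U⋆) dU = K_n(A) + K_n(B)` for `1 ≤ n ≤ N`. -/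
theorem statement1 (N n : ℕ) (h1 : 1 ≤ n) (hn : n ≤ N) (haarU : Measure (UG N))
    [IsProbabilityMeasure haarU] [Measure.IsMulLeftInvariant haarU]
    (A B : Matrix (Fin N) (Fin N) ℂ) :
    (∫ U, Kcum haarU n (A + conjU U B) ∂haarU) =
      Kcum haarU n A + Kcum haarU n B := by
  have : NeZero n := ⟨by omega⟩
  simp only [Kcum_eq_of_le haarU hn, integral_const_mul, conjU_add_conjU, Matrix.add_apply]
  rw [integral_integral_prod_add_mul_eq_sum haarU _ _ (fun _ => continuous_conjU_apply A _ _)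
    (fun _ => continuous_conjU_apply B _ _), Fintype.sum_eq_add ∅ univ]
  · simp only [prod_empty, integral_const, probReal_univ, one_smul, mul_one, compl_empty,
      compl_univ]
    ring
  · exact univ_nonempty.ne_empty.symm
  · rintro S ⟨hS₀, hS₁⟩
    rw [integral_prod_conjU_cyclic_eq_zero hn haarU A (nonempty_iff_ne_empty.mpr hS₀) hS₁,
      zero_mul]
end

section
/- Let 1 ≤ n ≤ N, let A be an N×N complex matrix and let σ be a permutation of {0,…,n−1}. For an injective map i : {0,…,n−1} → {0,…,N−1} set I(σ, i) := ∫_{U(N)} ∏_{k=0}^{n−1} (U A U*)_{i(k), i(σ(k))} dU. Then: (i) I(σ, i) = I(σ, j) for any two injective maps i, j (the integral does not depend on the choice of distinct indices); and (ii) I(σ, i) = I(ρ σ ρ⁻¹, i) for every permutation ρ of {0,…,n−1} (the integral depends on σ only through its conjugacy class, i.e., its cycle type). -/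
open MeasureTheory Matrix

/-- `I(σ, i) = ∫_{U(N)} ∏_{k} (U A U⋆)_{i(k), i(σ(k))} dU`. -/
noncomputable def cyclicIntegral {N n : ℕ} (μ : Measure (UG N))
    (A : Matrix (Fin N) (Fin N) ℂ) (σ : Equiv.Perm (Fin n)) (i : Fin n → Fin N) : ℂ :=
  ∫ U, ∏ k : Fin n, conjU U A (i k) (i (σ k)) ∂μ

/-! Conjugating by a permutation matrix `P_π` permutes rows and columns of `U A U⋆` by `π`, and
left translation `U ↦ P_π U` preserves Haar measure; since any two injective index maps differ by
a permutation of `Fin N`, the integral does not depend on the indices. Conjugating `σ` by `ρ`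
amounts to reindexing the product by `ρ`, i.e. to replacing `i` by `i ∘ ρ`. -/

namespace Matrix

variable {m R : Type*} [Fintype m] [DecidableEq m]

theorem permMatrix_mul_mul_conjTranspose_permMatrix [NonAssocSemiring R] [StarRing R]
    (π : Equiv.Perm m) (X : Matrix m m R) :
    π.permMatrix R * X * (π.permMatrix R)ᴴ = X.submatrix π π := by
  rw [conjTranspose_permMatrix, PEquiv.toMatrix_toPEquiv_mul, PEquiv.mul_toMatrix_toPEquiv]
  rfl

theorem permMatrix_mem_unitaryGroup [CommRing R] [StarRing R] (π : Equiv.Perm m) :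
    π.permMatrix R ∈ unitaryGroup m R := by
  rw [mem_unitaryGroup_iff, star_eq_conjTranspose, conjTranspose_permMatrix, ← permMatrix_mul,
    inv_mul_cancel, permMatrix_one]

end Matrix

noncomputable def permUG {N : ℕ} (π : Equiv.Perm (Fin N)) : UG N :=
  ⟨π.permMatrix ℂ, permMatrix_mem_unitaryGroup π⟩

theorem conjU_mul {N : ℕ} (V U : UG N) (X : Matrix (Fin N) (Fin N) ℂ) :
    conjU (V * U) X =
      (V : Matrix (Fin N) (Fin N) ℂ) * conjU U X * star (V : Matrix (Fin N) (Fin N) ℂ) := by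
  simp only [conjU, Submonoid.coe_mul, star_mul, Matrix.mul_assoc]

theorem conjU_permUG_mul {N : ℕ} (π : Equiv.Perm (Fin N)) (U : UG N)
    (X : Matrix (Fin N) (Fin N) ℂ) : conjU (permUG π * U) X = (conjU U X).submatrix π π := by
  rw [conjU_mul]
  exact permMatrix_mul_mul_conjTranspose_permMatrix π _

theorem cyclicIntegral_perm_comp {N n : ℕ} (μ : Measure (UG N)) [μ.IsMulLeftInvariant]
    (A : Matrix (Fin N) (Fin N) ℂ) (σ : Equiv.Perm (Fin n)) (i : Fin n → Fin N)
    (π : Equiv.Perm (Fin N)) :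
    cyclicIntegral μ A σ (π ∘ i) = cyclicIntegral μ A σ i := by
  simpa only [cyclicIntegral, conjU_permUG_mul, submatrix_apply, Function.comp_apply] using
    integral_mul_left_eq_self (fun U => ∏ k, conjU U A (i k) (i (σ k))) (permUG π) (μ := μ)

theorem cyclicIntegral_eq_of_injective {N n : ℕ} (μ : Measure (UG N)) [μ.IsMulLeftInvariant]
    (A : Matrix (Fin N) (Fin N) ℂ) (σ : Equiv.Perm (Fin n)) {i j : Fin n → Fin N}
    (hi : Function.Injective i) (hj : Function.Injective j) :
    cyclicIntegral μ A σ i = cyclicIntegral μ A σ j := by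
  obtain ⟨π, hπ⟩ := Equiv.Perm.exists_extending_pair i j hi hj
  rw [← cyclicIntegral_perm_comp μ A σ i π, show π ∘ i = j from funext hπ]

theorem cyclicIntegral_conj {N n : ℕ} (μ : Measure (UG N))
    (A : Matrix (Fin N) (Fin N) ℂ) (σ ρ : Equiv.Perm (Fin n)) (i : Fin n → Fin N) :
    cyclicIntegral μ A (ρ * σ * ρ⁻¹) i = cyclicIntegral μ A σ (i ∘ ρ) := by
  refine congrArg (integral μ) (funext fun U => ?_)
  rw [← Equiv.prod_comp ρ]
  simp

theorem statement2_general (N n : ℕ) (haarU : Measure (UG N))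
    [Measure.IsMulLeftInvariant haarU]
    (A : Matrix (Fin N) (Fin N) ℂ) (σ : Equiv.Perm (Fin n))
    (i j : Fin n → Fin N) (hi : Function.Injective i) (hj : Function.Injective j) :
    cyclicIntegral haarU A σ i = cyclicIntegral haarU A σ j ∧
      ∀ ρ : Equiv.Perm (Fin n),
        cyclicIntegral haarU A σ i = cyclicIntegral haarU A (ρ * σ * ρ⁻¹) i := by
  refine ⟨cyclicIntegral_eq_of_injective haarU A σ hi hj, fun ρ => ?_⟩
  rw [cyclicIntegral_conj]
  exact cyclicIntegral_eq_of_injective haarU A σ hi (hi.comp ρ.injective)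

/-- The integral `I(σ, i)` (i) does not depend on the choice of the
injective index map `i`, and (ii) depends on `σ` only through its conjugacy class. -/
theorem statement2 (N n : ℕ) (h1 : 1 ≤ n) (hn : n ≤ N) (haarU : Measure (UG N))
    [IsProbabilityMeasure haarU] [Measure.IsMulLeftInvariant haarU]
    (A : Matrix (Fin N) (Fin N) ℂ) (σ : Equiv.Perm (Fin n))
    (i j : Fin n → Fin N) (hi : Function.Injective i) (hj : Function.Injective j) :
    cyclicIntegral haarU A σ i = cyclicIntegral haarU A σ j ∧
      ∀ ρ : Equiv.Perm (Fin n),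
        cyclicIntegral haarU A σ i = cyclicIntegral haarU A (ρ * σ * ρ⁻¹) i :=
  statement2_general N n haarU A σ i j hi hj
end

section
/- Let n ≥ 1, let g ≥ 0 be an integer, let α and β be partitions of n with r := 2g − 2 + ℓ(α) + ℓ(β) ≥ 0, and fix any σ_β ∈ Cl_β. Then the strictly monotone double Hurwitz number satisfies H_g^{•,<}(α, β) = |Cl_β| · #{σ ∈ Cl_α : n + 2 − ℓ(α) − ℓ(β) − ℓ([σ⁻¹ σ_β]) = 2g}; in particular H_g^{•,<}(α, β) is divisible by |Cl_β|. -/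
open Matrix

/-- The cycle type of a permutation, counting each fixed point as a cycle of length 1. -/
def fullCycleType {n : ℕ} (σ : Equiv.Perm (Fin n)) : Multiset ℕ :=
  σ.cycleType + Multiset.replicate (n - σ.cycleType.sum) 1

/-- Number of cycles of a permutation, counting fixed points as 1-cycles. -/
def numCycles {n : ℕ} (σ : Equiv.Perm (Fin n)) : ℕ := (fullCycleType σ).card

/-- A tuple of transpositions `τ_i = (a_i b_i)`, `a_i < b_i`, with `b_1 < b_2 < ⋯` strictly
increasing. -/
def IsStrictMonFactor {n r : ℕ} (t : Fin r → Equiv.Perm (Fin n)) : Prop :=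
  ∃ a b : Fin r → Fin n, (∀ i, a i < b i ∧ t i = Equiv.swap (a i) (b i)) ∧ StrictMono b

/-- A tuple of transpositions `τ_i = (a_i b_i)`, `a_i < b_i`, with `b_1 ≤ b_2 ≤ ⋯` weakly
increasing. -/
def IsWeakMonFactor {n r : ℕ} (t : Fin r → Equiv.Perm (Fin n)) : Prop :=
  ∃ a b : Fin r → Fin n, (∀ i, a i < b i ∧ t i = Equiv.swap (a i) (b i)) ∧ Monotone b

/-- The disconnected strictly monotone double Hurwitz number: the number of tuples
`(σ_α, σ_β, τ_1, …, τ_r)` with `σ_α σ_β τ_1 ⋯ τ_r = 1`, `σ_α` of cycle type `α`, `σ_β` of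
cycle type `β`, and the `τ_i` transpositions with strictly increasing larger moved points. -/
noncomputable def Hstrict (n r : ℕ) (α β : Nat.Partition n) : ℕ :=
  Nat.card {t : Equiv.Perm (Fin n) × Equiv.Perm (Fin n) × (Fin r → Equiv.Perm (Fin n)) //
    t.1 * t.2.1 * (List.ofFn t.2.2).prod = 1 ∧
    fullCycleType t.1 = α.parts ∧ fullCycleType t.2.1 = β.parts ∧
    IsStrictMonFactor t.2.2}

/-- The disconnected weakly monotone double Hurwitz number. -/
noncomputable def Hweak (n r : ℕ) (α β : Nat.Partition n) : ℕ :=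
  Nat.card {t : Equiv.Perm (Fin n) × Equiv.Perm (Fin n) × (Fin r → Equiv.Perm (Fin n)) //
    t.1 * t.2.1 * (List.ofFn t.2.2).prod = 1 ∧
    fullCycleType t.1 = α.parts ∧ fullCycleType t.2.1 = β.parts ∧
    IsWeakMonFactor t.2.2}


/-!
Every permutation `π` of `Fin n` has exactly one factorization into transpositions `(aᵢ bᵢ)`,
`aᵢ < bᵢ`, with strictly increasing `bᵢ`, and its length is `n - ℓ(π)`: the last factor must
be `(π⁻¹ M, M)` for the largest point `M` moved by `π`, and splitting it off splits one cycle
into two. Hence `H_g^{•,<}(α, β)` counts the pairs `(σ_α, σ_β)` with `ℓ(σ_α σ_β) = n - r`.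
Conjugating each pair so that `σ_β` becomes the fixed representative turns this count into
`|Cl_β|` times the count with `σ_β` fixed.
-/

open Equiv Equiv.Perm Finset

theorem Equiv.Perm.IsCycle.card_cycleType_swap_mul_add {α : Type*} [Fintype α] [DecidableEq α]
    {c : Perm α} (hc : c.IsCycle) {x : α} (hx : c x ≠ x) :
    Multiset.card (swap x (c x) * c).cycleType + #c.support =
      #(swap x (c x) * c).support + 2 := by
  by_cases h2 : c (c x) = x
  · have hswap : c = swap x (c x) := hc.eq_swap_of_apply_apply_eq_self hx h2
    rw [hswap, swap_apply_left, swap_mul_self, card_support_swap (Ne.symm hx)]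
    simp
  · rw [(hc.swap_mul hx h2).cycleType, support_swap_mul_eq c x h2,
      card_sdiff_of_subset (singleton_subset_iff.mpr (mem_support.mpr hx))]
    have : 1 ≤ #c.support := card_pos.mpr ⟨x, mem_support.mpr hx⟩
    simp only [Multiset.card_singleton, card_singleton]
    omega

section NumCycles

variable {n : ℕ}

theorem fullCycleType_eq_parts_partition (σ : Perm (Fin n)) :
    fullCycleType σ = σ.partition.parts := by
  simp [fullCycleType, parts_partition, sum_cycleType]

theorem isConj_iff_fullCycleType_eq {σ τ : Perm (Fin n)} :
    IsConj σ τ ↔ fullCycleType σ = fullCycleType τ := by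
  rw [partition_eq_of_isConj, Nat.Partition.ext_iff, fullCycleType_eq_parts_partition,
    fullCycleType_eq_parts_partition]

theorem fullCycleType_inv (σ : Perm (Fin n)) : fullCycleType σ⁻¹ = fullCycleType σ := by
  simp [fullCycleType]

theorem numCycles_inv (σ : Perm (Fin n)) : numCycles σ⁻¹ = numCycles σ := by
  rw [numCycles, numCycles, fullCycleType_inv]

theorem numCycles_eq_of_isConj {σ τ : Perm (Fin n)} (h : IsConj σ τ) :
    numCycles σ = numCycles τ := by
  rw [numCycles, numCycles, isConj_iff_fullCycleType_eq.mp h]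

theorem numCycles_one : numCycles (1 : Perm (Fin n)) = n := by
  simp [numCycles, fullCycleType]

theorem numCycles_add_card_support (σ : Perm (Fin n)) :
    numCycles σ + #σ.support = Multiset.card σ.cycleType + n := by
  have : #σ.support ≤ n := by simpa using card_le_univ σ.support
  simp only [numCycles, fullCycleType, Multiset.card_add, Multiset.card_replicate, sum_cycleType]
  omega

theorem numCycles_swap_mul {f : Perm (Fin n)} {x : Fin n} (hx : f x ≠ x) :
    numCycles (swap x (f x) * f) = numCycles f + 1 := by
  set c := f.cycleOf x
  have hc : c.IsCycle := f.isCycle_cycleOf hx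
  have hcx : c x = f x := f.cycleOf_apply_self x
  have hdisj : (f * c⁻¹).Disjoint c := disjoint_mul_inv_of_mem_cycleFactorsFinset
    (cycleOf_mem_cycleFactorsFinset_iff.mpr (mem_support.mpr hx))
  have hf : f = c * (f * c⁻¹) := by rw [← hdisj.commute.eq, inv_mul_cancel_right]
  have hdisj' : (swap x (c x) * c).Disjoint (f * c⁻¹) :=
    hdisj.symm.mono (fun y hy => (mem_support_swap_mul_imp_mem_support_ne hy).1) le_rfl
  have hsplit : swap x (f x) * f = swap x (c x) * c * (f * c⁻¹) := by
    rw [hcx, mul_assoc, ← hf]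
  have hct : Multiset.card f.cycleType = Multiset.card (f * c⁻¹).cycleType + 1 := by
    rw [hf, hdisj.symm.cycleType_mul, Multiset.card_add, hc.cycleType, Multiset.card_singleton,
      add_comm, ← hf]
  have hsupp : #f.support = #c.support + #(f * c⁻¹).support := by
    rw [hf, hdisj.symm.card_support_mul, ← hf]
  have hnew := numCycles_add_card_support (swap x (f x) * f)
  rw [hsplit, hdisj'.cycleType_mul, hdisj'.card_support_mul, Multiset.card_add] at hnew
  have := numCycles_add_card_support f
  have := hc.card_cycleType_swap_mul_add (hcx ▸ hx)
  rw [hsplit]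
  omega

end NumCycles

section StrictMonotoneFactorization

variable {n : ℕ}

theorem swap_mem_fixingSubgroup_Ici {a b K : Fin n} (ha : a < K) (hb : b < K) :
    swap a b ∈ fixingSubgroup (Perm (Fin n)) (Set.Ici K) := by
  rw [mem_fixingSubgroup_iff]
  intro y hy
  exact swap_apply_of_ne_of_ne (ha.trans_le hy).ne' (hb.trans_le hy).ne'

theorem apply_eq_of_mem_fixingSubgroup_Ici {π : Perm (Fin n)} {K x : Fin n}
    (hπ : π ∈ fixingSubgroup (Perm (Fin n)) (Set.Ici K)) (hx : K ≤ x) : π x = x :=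
  (mem_fixingSubgroup_iff _).mp hπ x hx

theorem apply_lt_of_mem_fixingSubgroup_Ici {π : Perm (Fin n)} {K x : Fin n}
    (hπ : π ∈ fixingSubgroup (Perm (Fin n)) (Set.Ici K)) (hx : x < K) : π x < K := by
  by_contra! hle
  exact hx.not_ge (π.injective (apply_eq_of_mem_fixingSubgroup_Ici hπ hle) ▸ hle)

theorem prod_ofFn_snoc {G : Type*} [Monoid G] {r : ℕ} (s : Fin r → G) (g : G) :
    (List.ofFn (Fin.snoc s g : Fin (r + 1) → G)).prod = (List.ofFn s).prod * g := by
  rw [List.ofFn_succ']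
  simp

theorem strictMono_snoc {α : Type*} [Preorder α] {r : ℕ} {b : Fin r → α} (hb : StrictMono b)
    {M : α} (hM : ∀ i, b i < M) : StrictMono (Fin.snoc b M : Fin (r + 1) → α) := by
  intro i j hij
  induction j using Fin.lastCases with
  | last => induction i using Fin.lastCases with
    | last => exact absurd hij (lt_irrefl _)
    | cast i => simpa using hM i
  | cast j => induction i using Fin.lastCases with
    | last => exact absurd hij (not_lt.mpr (Fin.castSucc_lt_last j).le)
    | cast i => simpa using hb (Fin.castSucc_lt_castSucc_iff.mp hij)

theorem prod_ofFn_mem_fixingSubgroup_Ici {r : ℕ} {t : Fin r → Perm (Fin n)} {a b : Fin r → Fin n}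
    (hab : ∀ i, a i < b i ∧ t i = swap (a i) (b i)) {K : Fin n} (hK : ∀ i, b i < K) :
    (List.ofFn t).prod ∈ fixingSubgroup (Perm (Fin n)) (Set.Ici K) :=
  list_prod_mem fun g hg => by
    obtain ⟨i, rfl⟩ := (List.mem_ofFn' t g).mp hg
    rw [(hab i).2]
    exact swap_mem_fixingSubgroup_Ici ((hab i).1.trans (hK i)) (hK i)

theorem prod_ofFn_apply_last_lt {r : ℕ} {t : Fin (r + 1) → Perm (Fin n)}
    {a b : Fin (r + 1) → Fin n} (hab : ∀ i, a i < b i ∧ t i = swap (a i) (b i))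
    (hb : StrictMono b) : (List.ofFn t).prod (b (Fin.last r)) < b (Fin.last r) := by
  have hsplit := prod_ofFn_snoc (Fin.init t) (t (Fin.last r))
  rw [Fin.snoc_init_self] at hsplit
  rw [hsplit, Perm.mul_apply, (hab _).2, swap_apply_right]
  exact apply_lt_of_mem_fixingSubgroup_Ici (prod_ofFn_mem_fixingSubgroup_Ici
    (fun i => hab i.castSucc) (fun i => hb (Fin.castSucc_lt_last i))) (hab _).1

theorem lt_of_prod_ofFn_mem_fixingSubgroup_Ici {r : ℕ} {t : Fin r → Perm (Fin n)}
    {a b : Fin r → Fin n} (hab : ∀ i, a i < b i ∧ t i = swap (a i) (b i)) (hb : StrictMono b)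
    {K : Fin n} (hK : (List.ofFn t).prod ∈ fixingSubgroup (Perm (Fin n)) (Set.Ici K)) :
    ∀ i, b i < K := by
  cases r with
  | zero => exact fun i => i.elim0
  | succ r =>
    have hlast : b (Fin.last r) < K := by
      by_contra! hle
      exact (prod_ofFn_apply_last_lt hab hb).ne (apply_eq_of_mem_fixingSubgroup_Ici hK hle)
    exact fun i => (hb.monotone (Fin.le_last i)).trans_lt hlast

theorem IsStrictMonFactor.snoc {r : ℕ} {s : Fin r → Perm (Fin n)} (hs : IsStrictMonFactor s)
    {a M : Fin n} (haM : a < M)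
    (hfix : (List.ofFn s).prod ∈ fixingSubgroup (Perm (Fin n)) (Set.Ici M)) :
    IsStrictMonFactor (Fin.snoc s (swap a M) : Fin (r + 1) → Perm (Fin n)) := by
  obtain ⟨a', b, hab, hb⟩ := hs
  refine ⟨Fin.snoc a' a, Fin.snoc b M, fun i => ?_,
    strictMono_snoc hb (lt_of_prod_ofFn_mem_fixingSubgroup_Ici hab hb hfix)⟩
  induction i using Fin.lastCases with
  | last => simpa using haM
  | cast i => simpa using hab i

theorem IsStrictMonFactor.exists_eq_snoc {r : ℕ} {t : Fin (r + 1) → Perm (Fin n)}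
    (ht : IsStrictMonFactor t) :
    ∃ (s : Fin r → Perm (Fin n)) (a M : Fin n), t = Fin.snoc s (swap a M) ∧
      IsStrictMonFactor s ∧ a < M ∧
      (List.ofFn s).prod ∈ fixingSubgroup (Perm (Fin n)) (Set.Ici M) := by
  obtain ⟨a, b, hab, hb⟩ := ht
  refine ⟨Fin.init t, a (Fin.last r), b (Fin.last r), ?_,
    ⟨Fin.init a, Fin.init b, fun i => hab i.castSucc,
      fun i j hij => hb (Fin.castSucc_lt_castSucc_iff.mpr hij)⟩, (hab _).1,
    prod_ofFn_mem_fixingSubgroup_Ici (fun i => hab i.castSucc)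
      (fun i => hb (Fin.castSucc_lt_last i))⟩
  rw [← (hab _).2, Fin.snoc_init_self]

theorem mul_swap_apply_left_of_mem_fixingSubgroup_Ici {ρ : Perm (Fin n)} {M : Fin n}
    (hρ : ρ ∈ fixingSubgroup (Perm (Fin n)) (Set.Ici M)) (a : Fin n) : (ρ * swap a M) a = M := by
  rw [Perm.mul_apply, swap_apply_left]
  exact apply_eq_of_mem_fixingSubgroup_Ici hρ le_rfl

theorem isGreatest_mul_swap_of_mem_fixingSubgroup_Ici {ρ : Perm (Fin n)} {a M : Fin n}
    (hρ : ρ ∈ fixingSubgroup (Perm (Fin n)) (Set.Ici M)) (haM : a < M) :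
    IsGreatest {x | (ρ * swap a M) x ≠ x} M := by
  refine ⟨?_, fun x hx => ?_⟩
  · show ρ (swap a M M) ≠ M
    rw [swap_apply_right]
    exact (apply_lt_of_mem_fixingSubgroup_Ici hρ haM).ne
  · by_contra! hlt
    apply hx
    rw [Perm.mul_apply, swap_apply_of_ne_of_ne (haM.trans hlt).ne' hlt.ne']
    exact apply_eq_of_mem_fixingSubgroup_Ici hρ hlt.le

theorem numCycles_mul_swap_of_mem_fixingSubgroup_Ici {ρ : Perm (Fin n)} {a M : Fin n}
    (hρ : ρ ∈ fixingSubgroup (Perm (Fin n)) (Set.Ici M)) (haM : a < M) :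
    numCycles ρ = numCycles (ρ * swap a M) + 1 := by
  have hM : (ρ * swap a M) M ≠ M := (isGreatest_mul_swap_of_mem_fixingSubgroup_Ici hρ haM).1
  have hρ' : swap M ((ρ * swap a M) M) * (ρ * swap a M) = ρ := by
    rw [mul_swap_eq_swap_mul, Perm.mul_apply, apply_eq_of_mem_fixingSubgroup_Ici hρ le_rfl,
      swap_apply_right, Equiv.swap_comm, swap_mul_self_mul]
  rw [← numCycles_swap_mul hM, hρ']

theorem IsStrictMonFactor.numCycles_prod_add {r : ℕ} {t : Fin r → Perm (Fin n)}
    (ht : IsStrictMonFactor t) : numCycles (List.ofFn t).prod + r = n := by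
  induction r with
  | zero => simp [numCycles_one]
  | succ r ih =>
    obtain ⟨s, a, M, rfl, hs, haM, hfix⟩ := ht.exists_eq_snoc
    have := ih hs
    rw [numCycles_mul_swap_of_mem_fixingSubgroup_Ici hfix haM] at this
    rw [prod_ofFn_snoc]
    omega

theorem IsStrictMonFactor.eq_of_prod_eq {r : ℕ} {t t' : Fin r → Perm (Fin n)}
    (ht : IsStrictMonFactor t) (ht' : IsStrictMonFactor t')
    (h : (List.ofFn t).prod = (List.ofFn t').prod) : t = t' := by
  induction r with
  | zero => exact Subsingleton.elim _ _
  | succ r ih =>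
    obtain ⟨s, a, M, rfl, hs, haM, hfix⟩ := ht.exists_eq_snoc
    obtain ⟨s', a', M', rfl, hs', haM', hfix'⟩ := ht'.exists_eq_snoc
    rw [prod_ofFn_snoc, prod_ofFn_snoc] at h
    obtain rfl : M = M' := (isGreatest_mul_swap_of_mem_fixingSubgroup_Ici hfix haM).unique
      (h ▸ isGreatest_mul_swap_of_mem_fixingSubgroup_Ici hfix' haM')
    obtain rfl : a = a' := ((List.ofFn s).prod * swap a M).injective <| by
      rw [mul_swap_apply_left_of_mem_fixingSubgroup_Ici hfix, h,
        mul_swap_apply_left_of_mem_fixingSubgroup_Ici hfix']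
    rw [ih hs hs' (mul_right_cancel h)]

end StrictMonotoneFactorization

theorem exists_isStrictMonFactor {n : ℕ} (π : Perm (Fin n)) :
    ∃ (r : ℕ) (t : Fin r → Perm (Fin n)), IsStrictMonFactor t ∧ (List.ofFn t).prod = π := by
  induction hk : #π.support using Nat.strong_induction_on generalizing π with
  | _ k ih =>
  by_cases hπ : π = 1
  · exact ⟨0, Fin.elim0, ⟨Fin.elim0, Fin.elim0, fun i => i.elim0, fun i => i.elim0⟩, by simp [hπ]⟩
  have hne : π.support.Nonempty := nonempty_iff_ne_empty.mpr (mt support_eq_empty_iff.mp hπ)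
  set M := π.support.max' hne
  have hM : M ∈ π.support := π.support.max'_mem hne
  set a := π⁻¹ M
  have hπa : π a = M := π.apply_symm_apply M
  have ha : a ∈ π.support := by
    rw [mem_support, hπa]
    intro h
    rw [← h] at hπa
    exact mem_support.mp hM hπa
  have haM : a < M :=
    (π.support.le_max' a ha).lt_of_ne fun h => mem_support.mp ha (h ▸ hπa)
  set ρ := π * swap a M
  have hρ : ρ ∈ fixingSubgroup (Perm (Fin n)) (Set.Ici M) := by
    refine (mem_fixingSubgroup_iff _).mpr fun x hx => ?_
    rcases (Set.mem_Ici.mp hx).eq_or_lt with rfl | hlt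
    · simpa [ρ, Perm.mul_apply] using hπa
    · rw [Perm.smul_def, Perm.mul_apply, swap_apply_of_ne_of_ne (haM.trans hlt).ne' hlt.ne']
      exact notMem_support.mp fun hx => (π.support.le_max' x hx).not_gt hlt
  have hsupp : ρ.support ⊆ π.support.erase M := by
    intro x hx
    refine mem_erase.mpr ⟨?_, ?_⟩
    · rintro rfl
      exact mem_support.mp hx (apply_eq_of_mem_fixingSubgroup_Ici hρ le_rfl)
    · have := support_mul_le π (swap a M) hx
      simp only [support_swap haM.ne, sup_eq_union, mem_union, mem_insert, mem_singleton] at this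
      rcases this with h | rfl | rfl <;> assumption
  obtain ⟨r, s, hs, hsρ⟩ :=
    ih _ (hk ▸ (card_le_card hsupp).trans_lt (card_erase_lt_of_mem hM)) ρ rfl
  refine ⟨r + 1, Fin.snoc s (swap a M), hs.snoc haM (hsρ ▸ hρ), ?_⟩
  rw [prod_ofFn_snoc, hsρ, mul_swap_mul_self]

theorem Hstrict_eq_card_pairs {n : ℕ} (r : ℕ) (α β : n.Partition) :
    Hstrict n r α β = Nat.card {p : Perm (Fin n) × Perm (Fin n) //
      fullCycleType p.1 = α.parts ∧ fullCycleType p.2 = β.parts ∧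
        numCycles (p.1 * p.2) + r = n} := by
  refine Nat.card_congr (Equiv.ofBijective
    (fun t => ⟨(t.1.1, t.1.2.1), t.2.2.1, t.2.2.2.1, ?_⟩) ⟨?_, ?_⟩)
  · rw [← numCycles_inv, ← eq_inv_of_mul_eq_one_right t.2.1]
    exact t.2.2.2.2.numCycles_prod_add
  · rintro ⟨⟨σa, σb, t⟩, h⟩ ⟨⟨σa', σb', t'⟩, h'⟩ heq
    simp only [Subtype.mk.injEq, Prod.mk.injEq] at heq
    obtain ⟨rfl, rfl⟩ := heq
    obtain rfl : t = t' := h.2.2.2.eq_of_prod_eq h'.2.2.2 <| by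
      rw [eq_inv_of_mul_eq_one_right h.1, eq_inv_of_mul_eq_one_right h'.1]
    rfl
  · rintro ⟨⟨σa, σb⟩, hα, hβ, hn⟩
    dsimp only at hn
    obtain ⟨r', t, ht, hprod⟩ := exists_isStrictMonFactor (σa * σb)⁻¹
    obtain rfl : r' = r := by
      have := ht.numCycles_prod_add
      rw [hprod, numCycles_inv] at this
      omega
    exact ⟨⟨(σa, σb, t), by rw [hprod, mul_inv_cancel], hα, hβ, ht⟩, rfl⟩

theorem card_pairs_isConj_mul_mem {G : Type*} [Group G] {S T : Set G}
    (hS : ∀ {x y}, IsConj x y → x ∈ S → y ∈ S) (hT : ∀ {x y}, IsConj x y → x ∈ T → y ∈ T)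
    (g₀ : G) :
    Nat.card {p : G × G // p.1 ∈ S ∧ IsConj g₀ p.2 ∧ p.1 * p.2 ∈ T} =
      Nat.card {y // IsConj g₀ y} * Nat.card {x // x ∈ S ∧ x * g₀ ∈ T} := by
  choose k hk using fun y : {y // IsConj g₀ y} => isConj_iff.mp y.2
  have hconj (c x : G) : IsConj x (c⁻¹ * x * c) := isConj_iff.mpr ⟨c⁻¹, by group⟩
  rw [← Nat.card_prod]
  refine Nat.card_congr
    { toFun := fun p => (⟨p.1.2, p.2.2.1⟩,
        ⟨(k ⟨p.1.2, p.2.2.1⟩)⁻¹ * p.1.1 * k ⟨p.1.2, p.2.2.1⟩,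
          hS (hconj _ _) p.2.1, hT ?_ p.2.2.2⟩)
      invFun := fun q => ⟨(k q.1 * q.2.1 * (k q.1)⁻¹, q.1),
        hS (isConj_iff.mpr ⟨_, rfl⟩) q.2.2.1, q.1.2, ?_⟩
      left_inv := fun p => ?_
      right_inv := fun q => ?_ }
  · set c := k ⟨p.1.2, p.2.2.1⟩
    have hy : p.1.2 = c * g₀ * c⁻¹ := (hk ⟨p.1.2, p.2.2.1⟩).symm
    refine isConj_iff.mpr ⟨c⁻¹, ?_⟩
    rw [hy]
    group
  · exact hT (isConj_iff.mpr ⟨k q.1, by rw [← hk q.1]; group⟩) q.2.2.2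
  · exact Subtype.ext (Prod.ext (by group) rfl)
  · obtain ⟨⟨y, hy⟩, ⟨x, hx⟩⟩ := q
    exact Prod.ext rfl (Subtype.ext (by group))

theorem statement6_general (n g : ℕ) (α β : Nat.Partition n) (r : ℕ)
    (hr : r + 2 = 2 * g + α.parts.card + β.parts.card)
    (σβ : Equiv.Perm (Fin n)) (hσβ : fullCycleType σβ = β.parts) :
    Hstrict n r α β =
        Nat.card {σ : Equiv.Perm (Fin n) // fullCycleType σ = β.parts} *
          Nat.card {σ : Equiv.Perm (Fin n) // fullCycleType σ = α.parts ∧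
            n + 2 = α.parts.card + β.parts.card + numCycles (σ⁻¹ * σβ) + 2 * g} ∧
      Nat.card {σ : Equiv.Perm (Fin n) // fullCycleType σ = β.parts} ∣ Hstrict n r α β := by
  have hβ (σ : Perm (Fin n)) : fullCycleType σ = β.parts ↔ IsConj σβ σ := by
    rw [isConj_iff_fullCycleType_eq, hσβ, eq_comm]
  have hcount : Hstrict n r α β =
      Nat.card {σ : Perm (Fin n) // fullCycleType σ = β.parts} *
        Nat.card {σ : Perm (Fin n) // fullCycleType σ = α.parts ∧
          n + 2 = α.parts.card + β.parts.card + numCycles (σ⁻¹ * σβ) + 2 * g} := calc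
    _ = Nat.card {p : Perm (Fin n) × Perm (Fin n) // p.1 ∈ {σ | fullCycleType σ = α.parts} ∧
          IsConj σβ p.2 ∧ p.1 * p.2 ∈ {π | numCycles π + r = n}} := by
      rw [Hstrict_eq_card_pairs]
      exact Nat.card_congr (Equiv.subtypeEquivRight fun p => by rw [hβ]; rfl)
    _ = Nat.card {σ // IsConj σβ σ} * Nat.card {σ // σ ∈ {σ | fullCycleType σ = α.parts} ∧
          σ * σβ ∈ {π | numCycles π + r = n}} :=
      card_pairs_isConj_mul_mem (S := {σ | fullCycleType σ = α.parts})
        (T := {π | numCycles π + r = n})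
        (fun h hσ => (isConj_iff_fullCycleType_eq.mp h).symm.trans hσ)
        (fun h hπ => by rwa [Set.mem_ofPred_eq, ← numCycles_eq_of_isConj h]) σβ
    _ = _ := by
      rw [Nat.card_congr (Equiv.subtypeEquivRight hβ)]
      congr 1
      refine Nat.card_congr (Equiv.subtypeEquiv (Equiv.inv _) fun σ => ?_)
      simp only [Set.mem_ofPred_eq, Equiv.inv_apply, inv_inv, fullCycleType_inv]
      exact and_congr_right fun _ => by omega
  exact ⟨hcount, hcount ▸ dvd_mul_right _ _⟩

/-- `H_g^{•,<}(α,β) = |Cl_β| · #{σ ∈ Cl_α : n+2-ℓ(α)-ℓ(β)-ℓ([σ⁻¹σ_β]) = 2g}`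
for any fixed `σ_β ∈ Cl_β`; in particular `|Cl_β|` divides `H_g^{•,<}(α,β)`. -/
theorem statement6 (n g : ℕ) (h1 : 1 ≤ n) (α β : Nat.Partition n) (r : ℕ)
    (hr : r + 2 = 2 * g + α.parts.card + β.parts.card)
    (σβ : Equiv.Perm (Fin n)) (hσβ : fullCycleType σβ = β.parts) :
    Hstrict n r α β =
        Nat.card {σ : Equiv.Perm (Fin n) // fullCycleType σ = β.parts} *
          Nat.card {σ : Equiv.Perm (Fin n) // fullCycleType σ = α.parts ∧
            n + 2 = α.parts.card + β.parts.card + numCycles (σ⁻¹ * σβ) + 2 * g} ∧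
      Nat.card {σ : Equiv.Perm (Fin n) // fullCycleType σ = β.parts} ∣ Hstrict n r α β :=
  statement6_general n g α β r hr σβ hσβ
end

section
/- Let n ≥ 1 and r ≥ 0. The product map (τ_1, …, τ_r) ↦ τ_1 ⋯ τ_r is a bijection from the set Σ_{n,r} of r-tuples of transpositions of {1,…,n} such that, writing τ_i as the transposition of a_i < b_i, one has b_1 < b_2 < ⋯ < b_r, onto the set of permutations σ of {1,…,n} with exactly n − r cycles (counting fixed points). In particular every permutation σ ∈ S_n admits a unique such primitive factorization, and its length is n − ℓ([σ]). -/
open Matrix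

/-!
If `σ a = b` with `a ≠ b`, then `σ * (a b) = (b (σ b)) * σ` cuts `b` out of its cycle as a new
fixed point, so it has one cycle more than `σ`. In a factorization `τ_1 ⋯ τ_r` with
`τ_i = (a_i b_i)`, `a_i < b_i` and `b_1 < ⋯ < b_r`, no factor before the last touches `b_r`;
hence `b_r` is the largest point moved by the product `σ`, and `a_r = σ⁻¹ b_r`. So the last
factor is determined by `σ`, and removing it adds one cycle. Induction on `r` gives the cycle
count, uniqueness, and existence (peel off `(σ⁻¹ M, M)` for the largest moved point `M`).
-/

open Finset

namespace Equiv.Perm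

variable {α : Type*} [DecidableEq α] [Fintype α] {σ τ c : Perm α} {x : α}

theorem card_parts_partition_add_card_support (σ : Perm α) :
    σ.partition.parts.card + #σ.support = σ.cycleType.card + Fintype.card α := by
  rw [parts_partition, Multiset.card_add, Multiset.card_replicate]
  have := σ.support.card_le_univ
  omega

theorem card_parts_partition_one : (1 : Perm α).partition.parts.card = Fintype.card α := by
  simpa using card_parts_partition_add_card_support (1 : Perm α)

theorem eq_one_of_card_parts_partition_eq (h : σ.partition.parts.card = Fintype.card α) :
    σ = 1 := by
  have hcycles : 2 * σ.cycleType.card ≤ #σ.support := by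
    rw [← sum_cycleType]
    simpa [mul_comm] using Multiset.card_nsmul_le_sum fun _ => two_le_of_mem_cycleType
  have := card_parts_partition_add_card_support σ
  exact card_cycleType_eq_zero.1 (by omega)

theorem card_parts_partition_pos [Nonempty α] (σ : Perm α) : 0 < σ.partition.parts.card :=
  Multiset.card_pos.2 fun h =>
    Fintype.card_ne_zero (α := α) (by simpa [h] using σ.partition.parts_sum.symm)

theorem Disjoint.card_parts_partition_mul (h : Disjoint σ τ) :
    (σ * τ).partition.parts.card + Fintype.card α =
      σ.partition.parts.card + τ.partition.parts.card := by
  have hστ := card_parts_partition_add_card_support (σ * τ)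
  have hσ := card_parts_partition_add_card_support σ
  have hτ := card_parts_partition_add_card_support τ
  rw [h.cycleType_mul, h.card_support_mul, Multiset.card_add] at hστ
  omega

theorem IsCycle.card_parts_partition (hc : c.IsCycle) :
    c.partition.parts.card + #c.support = Fintype.card α + 1 := by
  rw [card_parts_partition_add_card_support, hc.cycleType, Multiset.card_singleton, add_comm]

theorem IsCycle.card_parts_partition_swap_mul (hc : c.IsCycle) (hx : c x ≠ x) :
    (swap x (c x) * c).partition.parts.card = c.partition.parts.card + 1 := by
  have hcount := hc.card_parts_partition
  by_cases hcc : c (c x) = x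
  · have hswap : c = swap x (c x) := hc.eq_swap_of_apply_apply_eq_self hx hcc
    have hsupp : #c.support = 2 := by rw [hswap]; exact card_support_swap hx.symm
    rw [mul_eq_one_iff_inv_eq.2 (by rw [swap_inv, ← hswap]), card_parts_partition_one]
    omega
  · have hcount' := (hc.swap_mul hx hcc).card_parts_partition
    rw [support_swap_mul_eq c x hcc, sdiff_singleton_eq_erase,
      card_erase_of_mem (mem_support.2 hx)] at hcount'
    have := card_pos.2 ⟨x, mem_support.2 hx⟩
    omega

theorem card_parts_partition_swap_mul (hx : σ x ≠ x) :
    (swap x (σ x) * σ).partition.parts.card = σ.partition.parts.card + 1 := by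
  set c := σ.cycleOf x
  have hc : c.IsCycle := isCycle_cycleOf σ hx
  have hdisj : Disjoint (σ * c⁻¹) c :=
    disjoint_mul_inv_of_mem_cycleFactorsFinset
      (cycleOf_mem_cycleFactorsFinset_iff.2 (mem_support.2 hx))
  have hdisj' : Disjoint (swap x (c x) * c) (σ * c⁻¹) :=
    hdisj.symm.mono (fun y hy => (mem_support_swap_mul_imp_mem_support_ne hy).1) le_rfl
  have hσ : σ = c * (σ * c⁻¹) := by rw [← hdisj.commute.eq, inv_mul_cancel_right]
  have hsplit : swap x (σ x) * σ = (swap x (c x) * c) * (σ * c⁻¹) := by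
    rw [cycleOf_apply_self, mul_assoc, ← hσ]
  have h₁ := hdisj'.card_parts_partition_mul
  have h₂ := hdisj.symm.card_parts_partition_mul
  rw [← hsplit, hc.card_parts_partition_swap_mul (by rwa [cycleOf_apply_self])] at h₁
  rw [← hσ] at h₂
  omega

theorem card_parts_partition_mul_swap {a b : α} (hab : a ≠ b) (h : σ a = b) :
    (σ * swap a b).partition.parts.card = σ.partition.parts.card + 1 := by
  have hb : σ b ≠ b := fun hb => hab (σ.injective (h.trans hb.symm))
  rw [← inv_mul_cancel_right (σ * swap a b) σ, ← swap_apply_apply, h]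
  exact card_parts_partition_swap_mul hb

end Equiv.Perm

open Equiv Equiv.Perm Fin

section SwapsProd

variable {α : Type*} [DecidableEq α]

def swapsProd {r : ℕ} (a b : Fin r → α) : Perm α := (List.ofFn fun i => swap (a i) (b i)).prod

@[simp]
theorem swapsProd_zero (a b : Fin 0 → α) : swapsProd a b = 1 := rfl

theorem swapsProd_succ {r : ℕ} (a b : Fin (r + 1) → α) :
    swapsProd a b = swapsProd (init a) (init b) * swap (a (last r)) (b (last r)) := by
  rw [swapsProd, List.ofFn_succ', List.prod_concat]
  rfl

theorem swapsProd_apply_eq_self {r : ℕ} {a b : Fin r → α} {x : α} (ha : ∀ i, a i ≠ x)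
    (hb : ∀ i, b i ≠ x) : swapsProd a b x = x := by
  have : swapsProd a b ∈ MulAction.stabilizer (Perm α) x := by
    refine (MulAction.stabilizer (Perm α) x).list_prod_mem fun τ hτ => ?_
    obtain ⟨i, rfl⟩ := List.mem_ofFn.1 hτ
    exact swap_apply_of_ne_of_ne (ha i).symm (hb i).symm
  exact this

variable [LinearOrder α] {r : ℕ}

section Last

variable {a b : Fin (r + 1) → α} (hab : ∀ i, a i < b i) (hb : StrictMono b)
include hab hb

theorem swapsProd_init_apply_of_le {x : α} (hx : b (last r) ≤ x) :
    swapsProd (init a) (init b) x = x :=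
  swapsProd_apply_eq_self
    (fun i => (((hab _).trans (hb (castSucc_lt_last i))).trans_le hx).ne)
    (fun i => ((hb (castSucc_lt_last i)).trans_le hx).ne)

theorem swapsProd_apply_last : swapsProd a b (a (last r)) = b (last r) := by
  rw [swapsProd_succ, mul_apply, swap_apply_left, swapsProd_init_apply_of_le hab hb le_rfl]

theorem isGreatest_swapsProd : IsGreatest {x | swapsProd a b x ≠ x} (b (last r)) := by
  have hfix : ∀ {x}, b (last r) ≤ x → swapsProd (init a) (init b) x = x :=
    swapsProd_init_apply_of_le hab hb
  refine ⟨fun h => (hab (last r)).ne ?_, fun x hx => not_lt.1 fun hlt => hx ?_⟩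
  · rw [swapsProd_succ, mul_apply, swap_apply_right] at h
    exact (swapsProd (init a) (init b)).injective (h.trans (hfix le_rfl).symm)
  · rw [swapsProd_succ, mul_apply, swap_apply_of_ne_of_ne ((hab _).trans hlt).ne' hlt.ne',
      hfix hlt.le]

end Last

theorem eq_of_swapsProd_eq : ∀ {r : ℕ} {a b a' b' : Fin r → α}, (∀ i, a i < b i) →
    StrictMono b → (∀ i, a' i < b' i) → StrictMono b' → swapsProd a b = swapsProd a' b' →
    a = a' ∧ b = b'
  | 0, _, _, _, _, _, _, _, _, _ => ⟨Subsingleton.elim _ _, Subsingleton.elim _ _⟩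
  | r + 1, a, b, a', b', hab, hb, hab', hb', h => by
    have hM : b (last r) = b' (last r) :=
      (isGreatest_swapsProd hab hb).unique (h ▸ isGreatest_swapsProd hab' hb')
    have hA : a (last r) = a' (last r) :=
      (swapsProd a b).injective <| by
        rw [swapsProd_apply_last hab hb, h, swapsProd_apply_last hab' hb', hM]
    have hinit : swapsProd (init a) (init b) = swapsProd (init a') (init b') := by
      rw [← mul_swap_mul_self (a (last r)) (b (last r)) (swapsProd (init a) (init b)),
        ← swapsProd_succ, h, swapsProd_succ, hA, hM, mul_swap_mul_self]
    obtain ⟨ha_init, hb_init⟩ := eq_of_swapsProd_eq (a := init a) (b := init b) (a' := init a')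
      (b' := init b') (fun i => hab _) (hb.comp strictMono_castSucc)
      (fun i => hab' _) (hb'.comp strictMono_castSucc) hinit
    rw [← snoc_init_self a, ← snoc_init_self b, ← snoc_init_self a', ← snoc_init_self b',
      ha_init, hb_init, hA, hM]
    exact ⟨rfl, rfl⟩

theorem card_parts_partition_swapsProd [Fintype α] : ∀ {r : ℕ} {a b : Fin r → α},
    (∀ i, a i < b i) → StrictMono b →
    (swapsProd a b).partition.parts.card + r = Fintype.card α
  | 0, _, _, _, _ => by simp [card_parts_partition_one]
  | r + 1, a, b, hab, hb => by
    have ih := card_parts_partition_swapsProd (a := init a) (b := init b) (fun i => hab _)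
      (hb.comp strictMono_castSucc)
    have hcount := card_parts_partition_mul_swap
      (σ := swapsProd (init a) (init b) * swap (a (last r)) (b (last r))) (hab (last r)).ne <| by
      rw [mul_apply, swap_apply_left, swapsProd_init_apply_of_le hab hb le_rfl]
    rw [mul_swap_mul_self] at hcount
    rw [swapsProd_succ]
    omega

theorem strictMono_snoc_s8 {β : Type*} [Preorder β] {f : Fin r → β} {x : β} (hf : StrictMono f)
    (hx : ∀ i, f i < x) : StrictMono (snoc f x : Fin (r + 1) → β) := by
  intro i j hij
  induction j using lastCases with
  | last =>
    induction i using lastCases with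
    | last => exact absurd hij (lt_irrefl _)
    | cast i => simpa using hx i
  | cast j =>
    induction i using lastCases with
    | last => exact absurd hij (not_lt.2 (le_last _))
    | cast i => simpa using hf (by simpa using hij)

variable [Fintype α]

theorem exists_mul_swap_of_ne_one {σ : Perm α} (hσ : σ ≠ 1) :
    ∃ A M, A < M ∧ σ A = M ∧ M ∈ σ.support ∧ (σ * swap A M).support ⊆ σ.support ∧
      ∀ x, M ≤ x → (σ * swap A M) x = x := by
  have hne : σ.support.Nonempty := nonempty_iff_ne_empty.2 (support_eq_empty_iff.not.2 hσ)
  set M := σ.support.max' hne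
  have hM : M ∈ σ.support := max'_mem _ _
  have hσA : σ (σ⁻¹ M) = M := σ.apply_symm_apply M
  have hAM : σ⁻¹ M ≠ M := fun h => mem_support.1 hM (by rwa [h] at hσA)
  have hA : σ⁻¹ M ∈ σ.support := by rw [mem_support, hσA]; exact hAM.symm
  refine ⟨σ⁻¹ M, M, (le_max' _ _ hA).lt_of_ne hAM, hσA, hM, fun x hx => ?_, fun x hx => ?_⟩
  · rcases mem_union.1 (support_mul_le _ _ hx) with h | h
    · exact h
    · rw [support_swap hAM, mem_insert, mem_singleton] at h
      rcases h with rfl | rfl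
      exacts [hA, hM]
  · rcases hx.eq_or_lt with rfl | hlt
    · rw [mul_apply, swap_apply_right, hσA]
    · rw [mul_apply, swap_apply_of_ne_of_ne (((le_max' _ _ hA).trans_lt hlt).ne') hlt.ne']
      exact notMem_support.1 fun hx => (le_max' _ _ hx).not_gt hlt

theorem exists_swapsProd_eq : ∀ {r : ℕ} (σ : Perm α),
    σ.partition.parts.card + r = Fintype.card α →
    ∃ a b : Fin r → α, (∀ i, a i < b i) ∧ StrictMono b ∧ (∀ i, b i ∈ σ.support) ∧
      swapsProd a b = σ
  | 0, σ, h => ⟨finZeroElim, finZeroElim, finZeroElim, fun i => i.elim0, finZeroElim,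
      (eq_one_of_card_parts_partition_eq h).symm ▸ rfl⟩
  | r + 1, σ, h => by
    have hσ : σ ≠ 1 := by
      rintro rfl
      rw [card_parts_partition_one] at h
      omega
    obtain ⟨A, M, hAM, hσA, hM, hsupp, hfix⟩ := exists_mul_swap_of_ne_one hσ
    have hcount := card_parts_partition_mul_swap hAM.ne hσA
    obtain ⟨a, b, hab, hb, hbsupp, hprod⟩ :=
      exists_swapsProd_eq (r := r) (σ * swap A M) (by omega)
    have hbM : ∀ i, b i < M := fun i => not_le.1 fun h => mem_support.1 (hbsupp i) (hfix _ h)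
    refine ⟨snoc a A, snoc b M, fun i => ?_, strictMono_snoc_s8 hb hbM, fun i => ?_, ?_⟩
    · induction i using lastCases <;> simp [hAM, hab]
    · induction i using lastCases <;> simp [hM, hsupp (hbsupp _)]
    · rw [swapsProd_succ, init_snoc, init_snoc, snoc_last, snoc_last, hprod, mul_swap_mul_self]

end SwapsProd

theorem numCycles_eq_card_parts_partition {n : ℕ} (σ : Perm (Fin n)) :
    numCycles σ = σ.partition.parts.card := by
  simp [numCycles, fullCycleType, parts_partition, sum_cycleType]

/-- The product map `(τ_1, …, τ_r) ↦ τ_1 ⋯ τ_r` is a bijection from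
`Σ_{n,r}` onto the permutations of `{1,…,n}` with exactly `n - r` cycles: every such
tuple multiplies to a permutation with `n - r` cycles, and every permutation with `n - r`
cycles admits a unique primitive factorization. -/
theorem statement8 (n r : ℕ) (h1 : 1 ≤ n) :
    (∀ t : Fin r → Equiv.Perm (Fin n), IsStrictMonFactor t →
        numCycles (List.ofFn t).prod = n - r) ∧
      ∀ σ : Equiv.Perm (Fin n), numCycles σ = n - r →
        ∃! t : Fin r → Equiv.Perm (Fin n),
          IsStrictMonFactor t ∧ (List.ofFn t).prod = σ := by
  have : Nonempty (Fin n) := ⟨⟨0, h1⟩⟩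
  have hcard := Fintype.card_fin n
  refine ⟨?_, fun σ hσ => ?_⟩
  · rintro t ⟨a, b, hab, hb⟩
    obtain rfl : t = fun i => swap (a i) (b i) := funext fun i => (hab i).2
    have hcount := card_parts_partition_swapsProd (fun i => (hab i).1) hb
    rw [numCycles_eq_card_parts_partition, ← swapsProd]
    omega
  · have hpos := card_parts_partition_pos σ
    rw [numCycles_eq_card_parts_partition] at hσ
    obtain ⟨a, b, hab, hb, -, rfl⟩ := exists_swapsProd_eq (r := r) σ (by omega)
    refine ⟨fun i => swap (a i) (b i), ⟨⟨a, b, fun i => ⟨hab i, rfl⟩, hb⟩, rfl⟩, ?_⟩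
    rintro t ⟨⟨a', b', hab', hb'⟩, hprod⟩
    obtain rfl : t = fun i => swap (a' i) (b' i) := funext fun i => (hab' i).2
    obtain ⟨rfl, rfl⟩ := eq_of_swapsProd_eq (fun i => (hab' i).1) hb' hab hb hprod
    rfl
end

section
/- Let 1 ≤ n ≤ N and let μ and ν be Borel probability measures on the space of N×N complex matrices, each invariant under unitary conjugation (for every U ∈ U(N), the pushforward under M ↦ U M U* equals the measure itself) and each supported on a compact set. Then the averaged precursor K_n^{(N)} is additive with respect to the additive convolution: ∫∫ K_n^{(N)}(A + B) dμ(A) dν(B) = ∫ K_n^{(N)}(A) dμ(A) + ∫ K_n^{(N)}(B) dν(B). -/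
open MeasureTheory Matrix

/-- The space of `N × N` complex matrices carries its Borel σ-algebra. -/
noncomputable instance (N : ℕ) : MeasurableSpace (Matrix (Fin N) (Fin N) ℂ) := borel _

instance (N : ℕ) : BorelSpace (Matrix (Fin N) (Fin N) ℂ) := ⟨rfl⟩

/-!
Conjugating by the diagonal unitary that flips the sign of the `j`-th basis vector multiplies a
product of matrix entries by `(-1)^m`, where `m` counts the occurrences of `j` among its indices;
hence under a conjugation-invariant law every such product with `m` odd has mean zero. Expanding
`∏ₖ (Y + B)_{k,k+1}` over subsets of the cycle, every mixed term contains a boundary edge whose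
endpoint occurs exactly once, so `∫ cycleProd (Y + B) dν(B) = cycleProd Y + ∫ cycleProd dν`.
Taking `Y = U A U⋆`, swapping the Haar and `ν` integrals and absorbing `U` into `ν` gives
`∫ K_n(A + B) dν(B) = K_n(A) + ∫ K_n dν`; integrating in `A` yields the claim.
-/

open Finset

instance (N : ℕ) : CompactSpace (UG N) := by
  have hclosed : IsClosed (unitaryGroup (Fin N) ℂ : Set (Matrix (Fin N) (Fin N) ℂ)) :=
    isClosed_unitary
  refine isCompact_iff_compactSpace.mp <|
    (isCompact_univ_pi fun _ => isCompact_univ_pi fun _ => isCompact_closedBall (0 : ℂ) 1)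
      |>.of_isClosed_subset hclosed fun U hU i _ j _ => ?_
  simpa using entry_norm_bound_of_unitary hU i j

instance (N : ℕ) : SecondCountableTopology (Matrix (Fin N) (Fin N) ℂ) :=
  inferInstanceAs (SecondCountableTopology (Fin N → Fin N → ℂ))

instance (N : ℕ) : LocallyCompactSpace (Matrix (Fin N) (Fin N) ℂ) :=
  inferInstanceAs (LocallyCompactSpace (Fin N → Fin N → ℂ))

theorem MeasureTheory.Integrable.of_continuous_of_isCompact_compl_null {α E : Type*}
    [TopologicalSpace α] [MeasurableSpace α] [OpensMeasurableSpace α] [T2Space α]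
    [NormedAddCommGroup E] {ρ : Measure α} [IsFiniteMeasure ρ] {s : Set α} (hs : IsCompact s)
    (hs0 : ρ sᶜ = 0) {f : α → E} (hf : Continuous f) : Integrable f ρ := by
  simpa [IntegrableOn, Measure.restrict_eq_self_of_ae_mem (mem_ae_iff.mpr hs0)] using
    hf.continuousOn.integrableOn_compact (μ := ρ) hs

theorem Finset.exists_notMem_finRotate_mem {n : ℕ} {S : Finset (Fin n)} {j k : Fin n}
    (hj : j ∈ S) (hk : k ∉ S) : ∃ i ∉ S, finRotate n i ∈ S := by
  by_contra! hclosed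
  have hiter : ∀ t : ℕ, (finRotate n)^[t] k ∉ S := fun t => by
    induction t with
    | zero => exact hk
    | succ t ih => rw [Function.iterate_succ_apply']; exact hclosed _ ih
  refine hiter (j - k).val ?_
  have := j.neZero
  rwa [← finCycle_eq_finRotate_iterate, finCycle_apply, add_sub_cancel]

section Conjugation

variable {N : ℕ}

theorem conjU_add (U : UG N) (X Y : Matrix (Fin N) (Fin N) ℂ) :
    conjU U (X + Y) = conjU U X + conjU U Y := by
  simp only [conjU, Matrix.mul_add, Matrix.add_mul]

theorem Continuous.conjU {α : Type*} [TopologicalSpace α] {f : α → UG N}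
    {g : α → Matrix (Fin N) (Fin N) ℂ} (hf : Continuous f) (hg : Continuous g) :
    Continuous fun x => conjU (f x) (g x) :=
  ((continuous_subtype_val.comp hf).matrix_mul hg).matrix_mul (continuous_subtype_val.comp hf).star

theorem integral_comp_conjU {ρ : Measure (Matrix (Fin N) (Fin N) ℂ)}
    (hρ : ∀ U : UG N, Measure.map (fun M => conjU U M) ρ = ρ) (U : UG N)
    {f : Matrix (Fin N) (Fin N) ℂ → ℂ} (hf : AEStronglyMeasurable f ρ) :
    ∫ X, f (conjU U X) ∂ρ = ∫ X, f X ∂ρ := by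
  have hU : Continuous fun X => conjU U X := continuous_const.conjU continuous_id
  conv_rhs => rw [← hρ U]
  rw [integral_map hU.aemeasurable (by rwa [hρ U])]

theorem integral_integral_conjU (haar : Measure (UG N)) [IsFiniteMeasure haar]
    {ρ : Measure (Matrix (Fin N) (Fin N) ℂ)} [IsFiniteMeasure ρ]
    (hρ : ∀ U : UG N, Measure.map (fun M => conjU U M) ρ = ρ)
    (hρc : ∃ s : Set (Matrix (Fin N) (Fin N) ℂ), IsCompact s ∧ ρ sᶜ = 0)
    {F : UG N → Matrix (Fin N) (Fin N) ℂ → ℂ} (hF : Continuous (Function.uncurry F)) :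
    ∫ X, ∫ U, F U (conjU U X) ∂haar ∂ρ = ∫ U, ∫ X, F U X ∂ρ ∂haar := by
  obtain ⟨s, hs, hs0⟩ := hρc
  have hint : Integrable (fun p : Matrix (Fin N) (Fin N) ℂ × UG N => F p.2 (conjU p.2 p.1))
      (ρ.prod haar) := by
    refine .of_continuous_of_isCompact_compl_null (hs.prod isCompact_univ) ?_ ?_
    · rw [show (s ×ˢ Set.univ)ᶜ = sᶜ ×ˢ (Set.univ : Set (UG N)) by ext; simp,
        Measure.prod_prod, hs0, zero_mul]
    · exact hF.comp (continuous_snd.prodMk (continuous_snd.conjU continuous_fst))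
  rw [integral_integral_swap hint]
  refine integral_congr_ae (.of_forall fun U => ?_)
  exact integral_comp_conjU hρ U (hF.comp (Continuous.prodMk_right U)).aestronglyMeasurable

def signUnitary (j : Fin N) : UG N :=
  ⟨diagonal fun i => if i = j then -1 else 1, by
    rw [Matrix.mem_unitaryGroup_iff, star_eq_conjTranspose, diagonal_conjTranspose,
      diagonal_mul_diagonal, ← diagonal_one]
    congr 1 with i
    by_cases hi : i = j <;> simp [hi]⟩

theorem conjU_signUnitary_apply (j : Fin N) (X : Matrix (Fin N) (Fin N) ℂ) (a b : Fin N) :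
    conjU (signUnitary j) X a b =
      (if a = j then -1 else 1) * X a b * (if b = j then -1 else 1) := by
  simp only [conjU, signUnitary, star_eq_conjTranspose, diagonal_conjTranspose, mul_diagonal,
    diagonal_mul, Pi.star_apply]
  split_ifs <;> simp

end Conjugation

section CycleProduct

variable {N : ℕ}

theorem integral_prod_entries_eq_zero {ι : Type*} {ρ : Measure (Matrix (Fin N) (Fin N) ℂ)}
    (hρ : ∀ U : UG N, Measure.map (fun M => conjU U M) ρ = ρ) (S : Finset ι) (a b : ι → Fin N)
    (j : Fin N) (hodd : Odd (#{k ∈ S | a k = j} + #{k ∈ S | b k = j})) :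
    ∫ X, ∏ k ∈ S, X (a k) (b k) ∂ρ = 0 := by
  have hsign : ∀ c : ι → Fin N, ∏ k ∈ S, (if c k = j then (-1 : ℂ) else 1) =
      (-1) ^ #{k ∈ S | c k = j} := by
    intro c
    simp [prod_ite]
  have hflip : ∀ X : Matrix (Fin N) (Fin N) ℂ,
      ∏ k ∈ S, conjU (signUnitary j) X (a k) (b k) = -∏ k ∈ S, X (a k) (b k) := by
    intro X
    simp only [conjU_signUnitary_apply, prod_mul_distrib, hsign]
    rw [mul_right_comm, ← pow_add, hodd.neg_one_pow, neg_one_mul]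
  have hcont : Continuous fun X : Matrix (Fin N) (Fin N) ℂ => ∏ k ∈ S, X (a k) (b k) :=
    continuous_finsetProd _ fun k _ => continuous_id.matrix_elem _ _
  have h := integral_comp_conjU hρ (signUnitary j) hcont.aestronglyMeasurable
  simp only [hflip, integral_neg] at h
  exact self_eq_neg.mp h.symm

def cycleProd {n : ℕ} (hn : n ≤ N) (X : Matrix (Fin N) (Fin N) ℂ) : ℂ :=
  ∏ k : Fin n, X (Fin.castLE hn k) (Fin.castLE hn (finRotate n k))

theorem continuous_cycleProd {n : ℕ} (hn : n ≤ N) : Continuous (cycleProd hn) :=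
  continuous_finsetProd _ fun _ _ => continuous_id.matrix_elem _ _

theorem integral_cycleProd_add {n : ℕ} (h1 : 1 ≤ n) (hn : n ≤ N)
    {ν : Measure (Matrix (Fin N) (Fin N) ℂ)} [IsProbabilityMeasure ν]
    (hν : ∀ U : UG N, Measure.map (fun M => conjU U M) ν = ν)
    (hνc : ∃ s : Set (Matrix (Fin N) (Fin N) ℂ), IsCompact s ∧ ν sᶜ = 0)
    (Y : Matrix (Fin N) (Fin N) ℂ) :
    ∫ B, cycleProd hn (Y + B) ∂ν = cycleProd hn Y + ∫ B, cycleProd hn B ∂ν := by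
  classical
  obtain ⟨s, hs, hs0⟩ := hνc
  set a : Fin n → Fin N := fun k => Fin.castLE hn k
  set b : Fin n → Fin N := fun k => Fin.castLE hn (finRotate n k)
  have hexpand : ∀ B : Matrix (Fin N) (Fin N) ℂ, cycleProd hn (Y + B) =
      ∑ T ∈ univ.powerset, (∏ k ∈ T, Y (a k) (b k)) * ∏ k ∈ univ \ T, B (a k) (b k) :=
    fun B => prod_add _ _ _
  have hint : ∀ T : Finset (Fin n), Integrable (fun B => ∏ k ∈ T, B (a k) (b k)) ν :=
    fun T => .of_continuous_of_isCompact_compl_null hs hs0 <|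
      continuous_finsetProd _ fun k _ => continuous_id.matrix_elem _ _
  have hmixed : ∀ T ∈ (univ : Finset (Fin n)).powerset, T ≠ univ ∧ T ≠ ∅ →
      ∫ B, (∏ k ∈ T, Y (a k) (b k)) * ∏ k ∈ univ \ T, B (a k) (b k) ∂ν = 0 := by
    rintro T - ⟨hTu, hTe⟩
    obtain ⟨j, hj⟩ : ∃ j, j ∉ T := by simpa [eq_univ_iff_forall] using hTu
    obtain ⟨k, hk⟩ := nonempty_iff_ne_empty.mpr hTe
    obtain ⟨i, hi, hri⟩ := exists_notMem_finRotate_mem (S := univ \ T)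
      (by simpa using hj) (by simpa using hk)
    rw [integral_const_mul, integral_prod_entries_eq_zero hν _ a b (b i), mul_zero]
    simp only [mem_sdiff, mem_univ, true_and, not_not] at hi hri
    simp [a, b, filter_eq', Fin.castLE_inj, hi, hri, -finRotate_apply]
  have hne : (univ : Finset (Fin n)) ≠ ∅ := (univ_nonempty_iff.mpr ⟨⟨0, h1⟩⟩).ne_empty
  simp only [hexpand]
  rw [integral_finsetSum _ fun T _ => (hint _).const_mul _,
    sum_eq_add_of_mem univ ∅ (mem_powerset_self _) (empty_mem_powerset _) hne hmixed]
  simp [cycleProd, a, b]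

end CycleProduct

section Cumulant

variable {N n : ℕ} (haar : Measure (UG N))

theorem Kcum_eq_integral_cycleProd (hn : n ≤ N) (X : Matrix (Fin N) (Fin N) ℂ) :
    Kcum haar n X = (N : ℂ) ^ (n - 1) * ∫ U, cycleProd hn (conjU U X) ∂haar := by
  have hrot : ∀ k : Fin n, finRotate n k = ⟨(k.1 + 1) % n, Nat.mod_lt _ k.pos⟩ := fun k => by
    have := k.neZero
    ext
    simp [finRotate_apply, Fin.val_add]
  simp only [Kcum, dif_pos hn, cycleProd, hrot]

theorem continuous_Kcum [IsFiniteMeasure haar] (hn : n ≤ N) : Continuous (Kcum haar n) := by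
  have hF : Continuous (Function.uncurry fun X (U : UG N) => cycleProd hn (conjU U X)) :=
    (continuous_cycleProd hn).comp (continuous_snd.conjU continuous_fst)
  have := continuous_parametric_integral_of_continuous (μ := haar) hF isCompact_univ
  simp only [Measure.restrict_univ] at this
  simpa only [funext (Kcum_eq_integral_cycleProd haar hn)] using this.const_mul _

theorem integral_Kcum [IsProbabilityMeasure haar] (hn : n ≤ N)
    {ρ : Measure (Matrix (Fin N) (Fin N) ℂ)} [IsFiniteMeasure ρ]
    (hρ : ∀ U : UG N, Measure.map (fun M => conjU U M) ρ = ρ)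
    (hρc : ∃ s : Set (Matrix (Fin N) (Fin N) ℂ), IsCompact s ∧ ρ sᶜ = 0) :
    ∫ X, Kcum haar n X ∂ρ = (N : ℂ) ^ (n - 1) * ∫ X, cycleProd hn X ∂ρ := by
  simp only [Kcum_eq_integral_cycleProd haar hn, integral_const_mul]
  rw [integral_integral_conjU haar hρ hρc (F := fun _ X => cycleProd hn X)
    ((continuous_cycleProd hn).comp continuous_snd)]
  simp

theorem integral_Kcum_add [IsProbabilityMeasure haar] (h1 : 1 ≤ n) (hn : n ≤ N)
    {ν : Measure (Matrix (Fin N) (Fin N) ℂ)} [IsProbabilityMeasure ν]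
    (hν : ∀ U : UG N, Measure.map (fun M => conjU U M) ν = ν)
    (hνc : ∃ s : Set (Matrix (Fin N) (Fin N) ℂ), IsCompact s ∧ ν sᶜ = 0)
    (A : Matrix (Fin N) (Fin N) ℂ) :
    ∫ B, Kcum haar n (A + B) ∂ν = Kcum haar n A + (N : ℂ) ^ (n - 1) * ∫ B, cycleProd hn B ∂ν := by
  have hF : Continuous (Function.uncurry fun (U : UG N) X => cycleProd hn (conjU U A + X)) :=
    (continuous_cycleProd hn).comp ((continuous_fst.conjU continuous_const).add continuous_snd)
  have hA : Integrable (fun U : UG N => cycleProd hn (conjU U A)) haar :=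
    .of_continuous_of_isCompact_compl_null isCompact_univ (by simp)
      ((continuous_cycleProd hn).comp (continuous_id.conjU continuous_const))
  calc ∫ B, Kcum haar n (A + B) ∂ν
      = (N : ℂ) ^ (n - 1) * ∫ B, ∫ U, cycleProd hn (conjU U A + conjU U B) ∂haar ∂ν := by
        simp only [Kcum_eq_integral_cycleProd haar hn, conjU_add, integral_const_mul]
    _ = (N : ℂ) ^ (n - 1) * ∫ U, ∫ B, cycleProd hn (conjU U A + B) ∂ν ∂haar := by
        rw [integral_integral_conjU haar hν hνc hF]
    _ = (N : ℂ) ^ (n - 1) * ∫ U, (cycleProd hn (conjU U A) + ∫ B, cycleProd hn B ∂ν) ∂haar := by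
        simp only [integral_cycleProd_add h1 hn hν hνc]
    _ = Kcum haar n A + (N : ℂ) ^ (n - 1) * ∫ B, cycleProd hn B ∂ν := by
        rw [integral_add hA (integrable_const _), Kcum_eq_integral_cycleProd haar hn]
        simp [mul_add]

end Cumulant

theorem statement12_general (N n : ℕ) (h1 : 1 ≤ n) (hn : n ≤ N) (haarU : Measure (UG N))
    [IsProbabilityMeasure haarU]
    (μ ν : Measure (Matrix (Fin N) (Fin N) ℂ))
    [IsProbabilityMeasure μ] [IsProbabilityMeasure ν]
    (hν : ∀ U : UG N, Measure.map (fun M => conjU U M) ν = ν)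
    (hμc : ∃ s : Set (Matrix (Fin N) (Fin N) ℂ), IsCompact s ∧ μ sᶜ = 0)
    (hνc : ∃ s : Set (Matrix (Fin N) (Fin N) ℂ), IsCompact s ∧ ν sᶜ = 0) :
    (∫ A, ∫ B, Kcum haarU n (A + B) ∂ν ∂μ) =
      (∫ A, Kcum haarU n A ∂μ) + ∫ B, Kcum haarU n B ∂ν := by
  obtain ⟨s, hs, hs0⟩ := hμc
  have hKμ : Integrable (Kcum haarU n) μ :=
    .of_continuous_of_isCompact_compl_null hs hs0 (continuous_Kcum haarU hn)
  simp only [integral_Kcum_add haarU h1 hn hν hνc]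
  rw [integral_add hKμ (integrable_const _), integral_Kcum haarU hn hν hνc]
  simp

/-- Additivity of the averaged precursor `K_n` with respect to additive
convolution of unitarily invariant, compactly supported Borel probability measures:
`∫∫ K_n(A + B) dμ(A) dν(B) = ∫ K_n dμ + ∫ K_n dν`. -/
theorem statement12 (N n : ℕ) (h1 : 1 ≤ n) (hn : n ≤ N) (haarU : Measure (UG N))
    [IsProbabilityMeasure haarU] [Measure.IsMulLeftInvariant haarU]
    (μ ν : Measure (Matrix (Fin N) (Fin N) ℂ))
    [IsProbabilityMeasure μ] [IsProbabilityMeasure ν]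
    (hμ : ∀ U : UG N, Measure.map (fun M => conjU U M) μ = μ)
    (hν : ∀ U : UG N, Measure.map (fun M => conjU U M) ν = ν)
    (hμc : ∃ s : Set (Matrix (Fin N) (Fin N) ℂ), IsCompact s ∧ μ sᶜ = 0)
    (hνc : ∃ s : Set (Matrix (Fin N) (Fin N) ℂ), IsCompact s ∧ ν sᶜ = 0) :
    (∫ A, ∫ B, Kcum haarU n (A + B) ∂ν ∂μ) =
      (∫ A, Kcum haarU n A ∂μ) + ∫ B, Kcum haarU n B ∂ν :=
  statement12_general N n h1 hn haarU μ ν hν hμc hνc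
end
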